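/- Let t be a g-term, p ∈ valid(t), and suppose t[p] is closed. Then for all g-terms r and substitution lists σ (satisfying the algorithm's preconditions: r is closed, tσ is closed, and t occurs at a position of SCC(r) in r): globalize(t)[p] = globalize_scc(r, σ, t)[p] = globalize_step(r, σ, t)[p] = globalize(t[p]). -/

import Mathlib

/-!
Induction on term size, following the three mutually recursive functions. Walking down `p`,
`globalizeStep` either continues with `globalizeScc` on an open subterm or restarts `globalize`
on the substituted subterm; substitution leaves the closed `u` untouched, so it still sits at
the remaining position. When the walk reaches `u` inside `globalizeScc r σ`, the SCC hypothesis
forces `r = u`, and `globalizeScc u σ u = globalize u` because a closed term reads no entry of `σ`.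
-/

namespace HashAlpha

/-- g-terms: λ-terms with de Bruijn indices, extended with global variables `gvar t`. -/
inductive GTerm : Type
  | var : ℕ → GTerm
  | app : GTerm → GTerm → GTerm
  | lam : GTerm → GTerm
  | gvar : GTerm → GTerm
  deriving DecidableEq

/-- A g-term is a pure λ-term if it contains no global variables. -/
def GTerm.IsPure : GTerm → Prop
  | .var _ => True
  | .app a b => a.IsPure ∧ b.IsPure
  | .lam a => a.IsPure
  | .gvar _ => False

/-- Directions for term positions: ↓, ↙, ↘. -/
inductive Dir : Type
  | down | left | right
  deriving DecidableEq

/-- A term position is a word over {↓, ↙, ↘}. -/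
abbrev Pos := List Dir

/-- `|p|_λ`: the number of ↓'s in a position. -/
def lamDepth (p : Pos) : ℕ := p.count Dir.down

/-- Term indexing `t[p]` (partial; does not descend into global variables). -/
def GTerm.index : GTerm → Pos → Option GTerm
  | t, [] => some t
  | .app a _, .left :: p => a.index p
  | .app _ b, .right :: p => b.index p
  | .lam a, .down :: p => a.index p
  | _, _ => none

/-- `valid(t)`: the set of positions where `t[p]` is defined. -/
def Valid (t : GTerm) : Set Pos := {p | (t.index p).isSome}

/-- `vars(t)`: positions of variables. -/
def Vars (t : GTerm) : Set Pos := {p | ∃ i, t.index p = some (.var i)}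

/-- `free(t)`: positions of free variables. -/
def Free (t : GTerm) : Set Pos :=
  {p | ∃ i, t.index p = some (.var i) ∧ lamDepth p ≤ i}

/-- A term is closed if it has no free variables. -/
def Closed (t : GTerm) : Prop := Free t = ∅

/-- `p` is locally closed in `t`: every free variable of `t[p]` is also free in `t`. -/
def LocallyClosed (t : GTerm) (p : Pos) : Prop :=
  p ∈ Valid t ∧ ∀ u, t.index p = some u → ∀ q ∈ Free u, p ++ q ∈ Free t

/-- Subtract `d0` from every free variable (`d` is the current binder depth). -/
def declift (d0 : ℕ) : GTerm → ℕ → GTerm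
  | .var j, d => if d ≤ j then .var (j - d0) else .var j
  | .app a b, d => .app (declift d0 a d) (declift d0 b d)
  | .lam a, d => .lam (declift d0 a (d + 1))
  | .gvar a, _ => .gvar a

/-- The lift `⟨t⟩p`: equal to `t[p]` except every free variable of `t[p]` is
decremented by `|p|_λ`. -/
def liftAt (t : GTerm) (p : Pos) : Option GTerm :=
  (t.index p).map (fun u => declift (lamDepth p) u 0)

/-- Transition labels: ↓, ↙, ↘ and ↑. -/
inductive Lab : Type
  | down | left | right | up
  deriving DecidableEq

def Lab.ofDir : Dir → Lab
  | .down => .down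
  | .left => .left
  | .right => .right

/-- Transitions between term nodes. -/
inductive Trans : GTerm × Pos → Lab → GTerm × Pos → Prop
  | dir (t : GTerm) (p : Pos) (x : Dir) :
      (p ++ [x]) ∈ Valid t → Trans (t, p) (Lab.ofDir x) (t, p ++ [x])
  | up (t : GTerm) (q r : Pos) :
      t.index (q ++ Dir.down :: r) = some (.var (lamDepth r)) →
      Trans (t, q ++ Dir.down :: r) Lab.up (t, q)

/-- `R` is a bisimulation. -/
def IsBisim (R : GTerm × Pos → GTerm × Pos → Prop) : Prop :=
  ∀ n₁ n₂, R n₁ n₂ → ∀ x : Lab,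
    (∀ n₁', Trans n₁ x n₁' → ∃ n₂', Trans n₂ x n₂' ∧ R n₁' n₂') ∧
    (∀ n₂', Trans n₂ x n₂' → ∃ n₁', Trans n₁ x n₁' ∧ R n₁' n₂')

/-- Two nodes are bisimilar when some bisimulation relates them. -/
def Bisim (n₁ n₂ : GTerm × Pos) : Prop := ∃ R, IsBisim R ∧ R n₁ n₂

/-- `(t, p)` is a term node: `t` is closed and `p ∈ valid(t)`. -/
def IsNode (t : GTerm) (p : Pos) : Prop := Closed t ∧ p ∈ Valid t

/-- A single fork between term nodes (let-abs rule or closed rule). -/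
def SingleFork (n₁ n₂ : GTerm × Pos) : Prop :=
  (∃ t p q₁ q₂ r u,
      n₁ = (t, p ++ q₁ ++ r) ∧ n₂ = (t, p ++ q₂ ++ r) ∧
      IsNode t (p ++ q₁ ++ r) ∧ IsNode t (p ++ q₂ ++ r) ∧
      t.index p = some u ∧ LocallyClosed u q₁ ∧ liftAt u q₁ = liftAt u q₂) ∨
  (∃ t₁ t₂ p₁ p₂ r u,
      n₁ = (t₁, p₁ ++ r) ∧ n₂ = (t₂, p₂ ++ r) ∧
      IsNode t₁ (p₁ ++ r) ∧ IsNode t₂ (p₂ ++ r) ∧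
      t₁.index p₁ = some u ∧ Closed u ∧ t₂.index p₂ = some u)

/-- Fork equivalence: the transitive closure of single forks. -/
def ForkEquiv : GTerm × Pos → GTerm × Pos → Prop := Relation.TransGen SingleFork

/-- Shift free variables ≥ `c` up by `d`. -/
def shiftAux (c d : ℕ) : GTerm → GTerm
  | .var j => if j < c then .var j else .var (j + d)
  | .app a b => .app (shiftAux c d a) (shiftAux c d b)
  | .lam a => .lam (shiftAux (c + 1) d a)
  | .gvar a => .gvar a

/-- Capture-avoiding substitution of free variable `i` by `u` (at current depth `d`). -/
def substAux (i : ℕ) (u : GTerm) : ℕ → GTerm → GTerm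
  | d, .var j => if j = i + d then shiftAux 0 d u else .var j
  | d, .app a b => .app (substAux i u d a) (substAux i u d b)
  | d, .lam a => .lam (substAux i u (d + 1) a)
  | _, .gvar a => .gvar a

/-- `t[i := u]`: capture-avoiding substitution of variable `i` by `u` in `t`. -/
def subst (i : ℕ) (u : GTerm) (t : GTerm) : GTerm := substAux i u 0 t

/-- Simultaneous capture-avoiding substitution of variable `i` by `σᵢ`
(at current depth `d`). -/
def msubstAux (σ : List GTerm) : ℕ → GTerm → GTerm
  | d, .var j =>
      if j < d then .var j else shiftAux 0 d (σ.getD (j - d) (.var (j - d)))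
  | d, .app a b => .app (msubstAux σ d a) (msubstAux σ d b)
  | d, .lam a => .lam (msubstAux σ (d + 1) a)
  | _, .gvar a => .gvar a

/-- `tσ`: simultaneous substitution of each variable `i` by the `i`-th element of `σ`. -/
def msubst (σ : List GTerm) (t : GTerm) : GTerm := msubstAux σ 0 t

/-- Term size (the term summary `|t|`); global variables count as leaves. -/
def gsize : GTerm → ℕ
  | .var _ => 1
  | .gvar _ => 1
  | .app a b => gsize a + gsize b + 1
  | .lam a => gsize a + 1

theorem gsize_shiftAux (c d : ℕ) (t : GTerm) : gsize (shiftAux c d t) = gsize t := by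
  induction t generalizing c with
  | var j => simp only [shiftAux]; split <;> rfl
  | app a b iha ihb => simp [shiftAux, gsize, iha, ihb]
  | lam a ih => simp [shiftAux, gsize, ih]
  | gvar a => rfl

theorem gsize_substAux_gvar (i : ℕ) (w : GTerm) (d : ℕ) (t : GTerm) :
    gsize (substAux i (.gvar w) d t) = gsize t := by
  induction t generalizing d with
  | var j => simp only [substAux]; split <;> rfl
  | app a b iha ihb => simp [substAux, gsize, iha, ihb]
  | lam a ih => simp [substAux, gsize, ih]
  | gvar a => rfl

theorem gsize_msubstAux (σ : List GTerm) (h : ∀ u ∈ σ, ∃ w, u = .gvar w)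
    (d : ℕ) (t : GTerm) : gsize (msubstAux σ d t) = gsize t := by
  induction t generalizing d with
  | var j =>
    simp only [msubstAux]
    split
    · rfl
    · rw [gsize_shiftAux]
      rcases Nat.lt_or_ge (j - d) σ.length with hl | hl
      · rw [List.getD_eq_getElem _ _ hl]
        obtain ⟨w, hw⟩ := h _ (List.getElem_mem hl)
        rw [hw]; rfl
      · rw [List.getD_eq_default _ _ hl]; rfl
  | app a b iha ihb => simp [msubstAux, gsize, iha, ihb]
  | lam a ih => simp [msubstAux, gsize, ih]
  | gvar a => rfl

theorem gsize_msubst (σ : List GTerm) (h : ∀ u ∈ σ, ∃ w, u = .gvar w)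
    (t : GTerm) : gsize (msubst σ t) = gsize t :=
  gsize_msubstAux σ h 0 t

/-- The naive globalization procedure. -/
def globalizeNaive : GTerm → GTerm
  | .lam t => .lam (globalizeNaive (subst 0 (.gvar (.lam t)) t))
  | .app t u => .app (globalizeNaive t) (globalizeNaive u)
  | .gvar t => .gvar t
  | .var i => .var i
termination_by t => gsize t
decreasing_by
  · simp only [subst, gsize_substAux_gvar, gsize]; omega
  · simp only [gsize]; omega
  · simp only [gsize]; omega

/-- The strongly connected component of a closed g-term: positions all of whose
nonempty prefixes index open terms. -/
def SCC (t : GTerm) : Set Pos :=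
  {p | p ∈ Valid t ∧ ∀ p' u, p' ≠ [] → p' <+: p → t.index p' = some u → ¬ Closed u}

/-- `duplicates(t)`: strict subterms in the SCC of `t` whose term summary (size)
is not unique within the SCC. -/
def duplicates (t : GTerm) : Set GTerm :=
  {u | ∃ p q v, p ∈ SCC t ∧ q ∈ SCC t ∧ p ≠ [] ∧ q ≠ [] ∧ p ≠ q ∧
      t.index p = some u ∧ t.index q = some v ∧ gsize u = gsize v}

open Classical in
mutual
/-- Efficient globalization. -/
noncomputable def globalize (r : GTerm) : GTerm :=
  globalizeScc r [] (by simp) r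
termination_by (gsize r, 2)
decreasing_by
  apply Prod.Lex.right; omega

noncomputable def globalizeScc (r : GTerm) (σ : List GTerm)
    (h : ∀ u ∈ σ, ∃ w, u = GTerm.gvar w) : GTerm → GTerm
  | .lam t => .lam (globalizeStep r (.gvar (.app r t) :: σ)
      (by
        intro u hu
        rcases List.mem_cons.mp hu with h' | h'
        · exact ⟨_, h'⟩
        · exact h u h') t)
  | .app t u => .app (globalizeStep r σ h t) (globalizeStep r σ h u)
  | .gvar t => .gvar t
  | .var i => msubst σ (.var i)
termination_by t => (gsize t, 1)
decreasing_by
  · apply Prod.Lex.left; simp only [gsize]; omega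
  · apply Prod.Lex.left; simp only [gsize]; omega
  · apply Prod.Lex.left; simp only [gsize]; omega

noncomputable def globalizeStep (r : GTerm) (σ : List GTerm)
    (h : ∀ u ∈ σ, ∃ w, u = GTerm.gvar w) (t : GTerm) : GTerm :=
  if Closed t ∨ t ∈ duplicates r then globalize (msubst σ t)
  else globalizeScc r σ h t
termination_by (gsize t, 3)
decreasing_by
  · rw [gsize_msubst σ h]; apply Prod.Lex.right; omega
  · apply Prod.Lex.right; omega
end

@[simp] lemma GTerm.index_nil (t : GTerm) : t.index [] = some t := by cases t <;> rfl

@[simp] lemma lamDepth_nil : lamDepth [] = 0 := rfl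

@[simp] lemma lamDepth_cons_down (p : Pos) : lamDepth (.down :: p) = lamDepth p + 1 := by
  simp [lamDepth]

@[simp] lemma lamDepth_cons_left (p : Pos) : lamDepth (.left :: p) = lamDepth p := by
  simp [lamDepth]

@[simp] lemma lamDepth_cons_right (p : Pos) : lamDepth (.right :: p) = lamDepth p := by
  simp [lamDepth]

def ClosedAt : GTerm → ℕ → Prop
  | .var j, d => j < d
  | .app a b, d => ClosedAt a d ∧ ClosedAt b d
  | .lam a, d => ClosedAt a (d + 1)
  | .gvar _, _ => True

lemma ClosedAt.mono {t : GTerm} {d e : ℕ} (ht : ClosedAt t d) (hde : d ≤ e) : ClosedAt t e := by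
  induction t generalizing d e with
  | var j => exact lt_of_lt_of_le ht hde
  | app a b iha ihb => exact ⟨iha ht.1 hde, ihb ht.2 hde⟩
  | lam a ih => exact ih ht (Nat.succ_le_succ hde)
  | gvar w => trivial

lemma closedAt_of_forall_index_var (t : GTerm) (d : ℕ)
    (h : ∀ p i, t.index p = some (.var i) → i < lamDepth p + d) : ClosedAt t d := by
  induction t generalizing d with
  | var j => simpa [ClosedAt] using h [] j (GTerm.index_nil _)
  | app a b iha ihb =>
    exact ⟨iha d fun p i hp => by simpa using h (.left :: p) i hp,
      ihb d fun p i hp => by simpa using h (.right :: p) i hp⟩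
  | lam a ih =>
    exact ih (d + 1) fun p i hp => by have := h (.down :: p) i hp; simp at this; omega
  | gvar w => trivial

lemma Closed.closedAt_zero {t : GTerm} (h : Closed t) : ClosedAt t 0 :=
  closedAt_of_forall_index_var t 0 fun p i hp => by
    by_contra hle
    have hfree : p ∈ Free t := ⟨i, hp, by omega⟩
    rw [Closed] at h
    simp [h] at hfree

lemma msubstAux_nil (d : ℕ) (t : GTerm) : msubstAux [] d t = t := by
  induction t generalizing d with
  | var j =>
    simp only [msubstAux, List.getD_nil, shiftAux]
    split_ifs <;> first | rfl | (congr 1; omega)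
  | app a b iha ihb => simp only [msubstAux, iha, ihb]
  | lam a ih => simp only [msubstAux, ih]
  | gvar w => rfl

lemma msubstAux_eq_of_prefix {σ₁ σ₂ : List GTerm} (hσ : σ₂ <+: σ₁) (d : ℕ) (t : GTerm)
    (ht : ClosedAt t (d + σ₂.length)) : msubstAux σ₁ d t = msubstAux σ₂ d t := by
  induction t generalizing d with
  | var j =>
    simp only [ClosedAt] at ht
    simp only [msubstAux]
    split_ifs
    · rfl
    · have hj : j - d < σ₂.length := by omega
      rw [List.getD_eq_getElem _ _ hj, List.getD_eq_getElem _ _ (hσ.length_le.trans_lt' hj),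
        hσ.getElem hj]
  | app a b iha ihb => simp only [msubstAux, iha d ht.1, ihb d ht.2]
  | lam a ih =>
    simp only [msubstAux, ih (d + 1) (by simpa [ClosedAt, Nat.add_right_comm] using ht)]
  | gvar w => rfl

lemma msubstAux_eq_self_of_closedAt (σ : List GTerm) {d : ℕ} {t : GTerm} (ht : ClosedAt t d) :
    msubstAux σ d t = t := by
  rw [msubstAux_eq_of_prefix σ.nil_prefix d t ht, msubstAux_nil]

lemma index_msubstAux (σ : List GTerm) {p : Pos} {t u : GTerm} (d : ℕ)
    (hp : t.index p = some u) :
    (msubstAux σ d t).index p = some (msubstAux σ (d + lamDepth p) u) := by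
  induction p generalizing d t with
  | nil => simp_all
  | cons x p ih =>
    cases t <;> cases x <;> simp only [GTerm.index, reduceCtorEq] at hp
    · exact ih d hp
    · exact ih d hp
    · rw [lamDepth_cons_down, ← Nat.add_assoc, Nat.add_right_comm]
      exact ih (d + 1) hp

lemma index_msubst_of_closed (σ : List GTerm) {t u : GTerm} {p : Pos}
    (hp : t.index p = some u) (hu : Closed u) : (msubst σ t).index p = some u := by
  rw [msubst, index_msubstAux σ 0 hp,
    msubstAux_eq_self_of_closedAt σ (hu.closedAt_zero.mono (Nat.zero_le _))]

mutual

theorem globalizeScc_eq_of_prefix (r : GTerm) {σ₁ σ₂ : List GTerm}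
    (h₁ : ∀ u ∈ σ₁, ∃ w, u = .gvar w) (h₂ : ∀ u ∈ σ₂, ∃ w, u = .gvar w) (hσ : σ₂ <+: σ₁) (t : GTerm)
    (ht : ClosedAt t σ₂.length) : globalizeScc r σ₁ h₁ t = globalizeScc r σ₂ h₂ t := by
  match t with
  | .var i =>
    rw [globalizeScc, globalizeScc]
    exact msubstAux_eq_of_prefix hσ 0 _ (by simpa using ht)
  | .app a b =>
    rw [globalizeScc, globalizeScc, globalizeStep_eq_of_prefix r h₁ h₂ hσ a ht.1,
      globalizeStep_eq_of_prefix r h₁ h₂ hσ b ht.2]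
  | .lam a =>
    rw [globalizeScc, globalizeScc,
      globalizeStep_eq_of_prefix r _ _ (List.cons_prefix_cons.2 ⟨rfl, hσ⟩) a ht]
  | .gvar w => rw [globalizeScc, globalizeScc]
termination_by (gsize t, 0)
decreasing_by all_goals (apply Prod.Lex.left; simp only [gsize]; omega)

theorem globalizeStep_eq_of_prefix (r : GTerm) {σ₁ σ₂ : List GTerm}
    (h₁ : ∀ u ∈ σ₁, ∃ w, u = .gvar w) (h₂ : ∀ u ∈ σ₂, ∃ w, u = .gvar w) (hσ : σ₂ <+: σ₁) (t : GTerm)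
    (ht : ClosedAt t σ₂.length) : globalizeStep r σ₁ h₁ t = globalizeStep r σ₂ h₂ t := by
  rw [globalizeStep, globalizeStep, msubst, msubst,
    msubstAux_eq_of_prefix hσ 0 t (by simpa using ht), globalizeScc_eq_of_prefix r h₁ h₂ hσ t ht]
termination_by (gsize t, 1)
decreasing_by exact Prod.Lex.right _ Nat.zero_lt_one

end

mutual

theorem index_globalize {s : GTerm} {p : Pos} {u : GTerm} (hp : s.index p = some u)
    (hu : Closed u) : (globalize s).index p = some (globalize u) := by
  rw [globalize]
  exact index_globalizeScc s [] _ s (fun _ => rfl) hp hu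
termination_by (gsize s, 2)
decreasing_by exact Prod.Lex.right _ (by omega)

theorem index_globalizeStep (r : GTerm) (σ : List GTerm) (hσ : ∀ u ∈ σ, ∃ w, u = .gvar w)
    {t : GTerm} {p : Pos} {u : GTerm} (hp : t.index p = some u) (hu : Closed u) :
    (globalizeStep r σ hσ t).index p = some (globalize u) := by
  rw [globalizeStep]
  split_ifs with hdup
  · exact index_globalize (index_msubst_of_closed σ hp hu) hu
  · exact index_globalizeScc r σ hσ t (fun ht => absurd (Or.inl ht) hdup) hp hu
termination_by (gsize t, 3)
decreasing_by
  · rw [gsize_msubst σ hσ]; exact Prod.Lex.right _ (by omega)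
  · exact Prod.Lex.right _ (by omega)

theorem index_globalizeScc (r : GTerm) (σ : List GTerm) (hσ : ∀ u ∈ σ, ∃ w, u = .gvar w)
    (t : GTerm) (hroot : Closed t → r = t) {p : Pos} {u : GTerm} (hp : t.index p = some u)
    (hu : Closed u) :
    (globalizeScc r σ hσ t).index p = some (globalize u) := by
  match p, t with
  | [], t =>
    obtain rfl : t = u := by simpa using hp
    obtain rfl := hroot hu
    rw [GTerm.index_nil, globalize,
      globalizeScc_eq_of_prefix _ hσ _ σ.nil_prefix _ hu.closedAt_zero]
  | .left :: _, .app _ _ =>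
    rw [globalizeScc]
    exact index_globalizeStep r σ hσ hp hu
  | .right :: _, .app _ _ =>
    rw [globalizeScc]
    exact index_globalizeStep r σ hσ hp hu
  | .down :: _, .lam _ =>
    rw [globalizeScc]
    exact index_globalizeStep r _ _ hp hu
  | _ :: _, .var _ | _ :: _, .gvar _ | .down :: _, .app _ _ | .left :: _, .lam _
  | .right :: _, .lam _ => simp [GTerm.index] at hp
termination_by (gsize t, 1)
decreasing_by all_goals (apply Prod.Lex.left; simp only [gsize]; omega)

end

lemma eq_of_mem_SCC_of_closed {r t : GTerm} {q : Pos} (hq : q ∈ SCC r)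
    (ht : r.index q = some t) (hc : Closed t) : r = t := by
  cases q with
  | nil => simpa using ht
  | cons x q =>
    exact absurd hc (hq.2 (x :: q) t (List.cons_ne_nil _ _) (List.prefix_refl _) ht)

/-- the context around a closed subterm does not influence
globalization. -/
theorem globalize_closed_subterm (t : GTerm) (p : Pos) (u : GTerm)
    (hp : t.index p = some u) (hu : Closed u)
    (r : GTerm) (σ : List GTerm) (hσ : ∀ v ∈ σ, ∃ w, v = GTerm.gvar w)
    (hr : Closed r) (htσ : Closed (msubst σ t))
    (hocc : ∃ q ∈ SCC r, r.index q = some t) :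
    (globalize t).index p = (globalizeScc r σ hσ t).index p ∧
    (globalizeScc r σ hσ t).index p = (globalizeStep r σ hσ t).index p ∧
    (globalizeStep r σ hσ t).index p = some (globalize u) := by
  obtain ⟨q, hq, hqt⟩ := hocc
  have hscc := index_globalizeScc r σ hσ t (eq_of_mem_SCC_of_closed hq hqt) hp hu
  have hstep := index_globalizeStep r σ hσ hp hu
  exact ⟨(index_globalize hp hu).trans hscc.symm, hscc.trans hstep.symm, hstep⟩

end HashAlpha
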